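/- arXiv:2212.14814 — 2 statements merged into one kernel-verified Lean document; each statement's English description precedes it below -/
import Mathlib

section
/- Let H be a cograph with cotree T, and let u be an internal node of T labelled ⊕ with free sets F and F' attached as follows: F' is a set of leaves that are children of a +-labelled child u' of u, and F is a set of leaves that are children of another child u'' of u (u'' ≠ u'). Pick x ∈ F and x' ∈ F'. Then for any vertex y of H distinct from x and x', {x, x'} is a module of the induced subgraph H[{x, x', y}] if and only if y is not a descendant leaf of u. -/
/-- `X` is a module of `G`: every vertex outside `X` is adjacent to all of `X` or none of `X`. -/
def IsModule {V : Type*} (G : SimpleGraph V) (X : Set V) : Prop :=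
  ∀ x ∈ X, ∀ y ∈ X, ∀ v, v ∉ X → (G.Adj v x ↔ G.Adj v y)

/-- `a,b,c,d` form an induced path on four vertices in `G`. -/
def IsInducedP4 {V : Type*} (G : SimpleGraph V) (a b c d : V) : Prop :=
  a ≠ b ∧ a ≠ c ∧ a ≠ d ∧ b ≠ c ∧ b ≠ d ∧ c ≠ d ∧
  G.Adj a b ∧ G.Adj b c ∧ G.Adj c d ∧ ¬ G.Adj a c ∧ ¬ G.Adj a d ∧ ¬ G.Adj b d

/-- A cograph is a graph with no induced `P₄`. -/
def IsCograph {V : Type*} (G : SimpleGraph V) : Prop :=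
  ∀ a b c d, ¬ IsInducedP4 G a b c d

/-- The edit of `G` by a set `S` of (unordered) pairs: the adjacency is flipped
exactly on the pairs of `S`. -/
def editGraph {V : Type*} (G : SimpleGraph V) (S : Set (Sym2 V)) : SimpleGraph V where
  Adj x y := x ≠ y ∧ ((G.Adj x y ∧ s(x,y) ∉ S) ∨ (¬ G.Adj x y ∧ s(x,y) ∈ S))
  symm := by
    constructor
    intro x y h
    refine ⟨h.1.symm, ?_⟩
    rw [Sym2.eq_swap]
    rcases h.2 with ⟨ha, hs⟩ | ⟨ha, hs⟩
    · exact Or.inl ⟨ha.symm, hs⟩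
    · exact Or.inr ⟨fun hadj => ha hadj.symm, hs⟩
  loopless := ⟨fun x h => h.1 rfl⟩

/-- `δ(X)`: the set of pairs with exactly one endpoint in `X`. -/
def cutPairs {V : Type*} (X : Set V) : Set (Sym2 V) :=
  {e | ∃ x y, e = s(x,y) ∧ x ∈ X ∧ y ∉ X}

/-- `X` is a `t`-module of `G`: editing at most `t` pairs of its cut makes it a module. -/
def IsTModule {V : Type*} (G : SimpleGraph V) (t : ℕ) (X : Set V) : Prop :=
  ∃ T ⊆ cutPairs X, T.ncard ≤ t ∧ IsModule (editGraph G T) X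

/-- `M` is (the vertex set of) a connected component of `G`. -/
def IsCC {V : Type*} (G : SimpleGraph V) (M : Set V) : Prop :=
  ∃ x, M = {y | G.Reachable x y}

/-- A comodule: a module which is a connected component of `G` or of its complement. -/
def IsComodule {V : Type*} (G : SimpleGraph V) (M : Set V) : Prop :=
  IsModule G M ∧ (IsCC G M ∨ IsCC Gᶜ M)

/-- A strong module: a module comparable with every module it meets. -/
def IsStrongModule {V : Type*} (G : SimpleGraph V) (M : Set V) : Prop :=
  IsModule G M ∧ ∀ M', IsModule G M' → (M ∩ M').Nonempty → M ⊆ M' ∨ M' ⊆ M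
/-- `a` is the parent of `b` in the rooted forest given by the parent map `par`. -/
def parentRel {V : Type*} (par : V → Option V) (a b : V) : Prop := par b = some a

/-- `a` is an ancestor of `b` (reflexively). -/
def Anc {V : Type*} (par : V → Option V) (a b : V) : Prop :=
  Relation.ReflTransGen (parentRel par) a b

/-- The parent map has no cycles, so it defines a rooted forest. -/
def ParAcyclic {V : Type*} (par : V → Option V) : Prop :=
  ∀ v, ¬ Relation.TransGen (parentRel par) v v

/-- The edges of the forest, each edge being identified with its lower (child) endpoint. -/
def forestEdges {V : Type*} (par : V → Option V) : Set V := {v | par v ≠ none}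

/-- A descending path, recorded as a pair (top endpoint, bottom endpoint). -/
def IsDescPath {V : Type*} (par : V → Option V) (P : V × V) : Prop := Anc par P.1 P.2

/-- The edge set of a descending path `P = (top, bot)`: the edges (identified with their
child endpoints) lying strictly below `top` and weakly above `bot`. -/
def dpEdges {V : Type*} (par : V → Option V) (P : V × V) : Set V :=
  {v | Anc par P.1 v ∧ v ≠ P.1 ∧ Anc par v P.2}

/-- `Q` is a (descending) subpath of the descending path `P`. -/
def IsSubpath {V : Type*} (par : V → Option V) (P Q : V × V) : Prop :=
  Anc par P.1 Q.1 ∧ Anc par Q.1 Q.2 ∧ Anc par Q.2 P.2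
/-- `a` is the least common ancestor of `u` and `v`. -/
def IsLCA {N : Type*} (par : N → Option N) (a u v : N) : Prop :=
  Anc par a u ∧ Anc par a v ∧ ∀ b, Anc par b u → Anc par b v → Anc par b a

/-- `(par, ι, lab)` is a cotree for the cograph `H`: a rooted tree whose leaves are the
vertices of `H` (via `ι`), whose internal nodes are labelled `⊕` (`true`) or `+` (`false`)
with alternating labels and at least two children, and where two vertices are adjacent
iff their least common ancestor is labelled `⊕`. -/
structure IsCotree {V N : Type*} (H : SimpleGraph V) (par : N → Option N)
    (ι : V → N) (lab : N → Bool) : Prop where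
  inj : Function.Injective ι
  acyclic : ParAcyclic par
  rooted : ∃ r, ∀ n, Anc par r n
  leaf_childless : ∀ n v, par n ≠ some (ι v)
  leaves_are_vertices : ∀ n, ({m | par m = some n} = ∅) → ∃ v, n = ι v
  internal_children : ∀ n, (∀ v, n ≠ ι v) → 2 ≤ {m | par m = some n}.ncard
  alternating : ∀ m n, par m = some n → (∃ v, m = ι v) ∨ lab m ≠ lab n
  adj_iff : ∀ x y, x ≠ y → ∀ a, IsLCA par a (ι x) (ι y) → (H.Adj x y ↔ lab a = true)

/-- The leaf-descendants of a node `u`, seen as a set of vertices of the graph. -/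
def De {V N : Type*} (par : N → Option N) (ι : V → N) (u : N) : Set V :=
  {x | Anc par u (ι x)}

/-!
If `y` is not below `u`, its least common ancestor with `x` and with `x'` is the same node, namely
its least common ancestor with `u`, so `y` sees `x` and `x'` alike. If `y` lies below `u'`, then
`lca(y, x) = u` is a `⊕`-node while `lca(y, x') = u'` is a `+`-node; if `y ∈ F`, then
`lca(y, x) = u''` is a `+`-node (it is internal, so its label alternates with that of `u`) while
`lca(y, x') = u`. In both cases `y` separates `x` from `x'`.
-/

section Forest

variable {N : Type*} {par : N → Option N}

lemma anc_of_par_eq_some {c p : N} (h : par c = some p) : Anc par p c :=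
  Relation.ReflTransGen.single h

lemma anc_iff_eq_or_anc_of_par_eq_some {b c p : N} (h : par c = some p) :
    Anc par b c ↔ b = c ∨ Anc par b p := by
  refine ⟨fun hb => ?_, ?_⟩
  · rcases Relation.ReflTransGen.cases_tail hb with rfl | ⟨q, hbq, hqc⟩
    · exact Or.inl rfl
    · have hqp : q = p := Option.some_inj.1 (hqc.symm.trans h)
      exact Or.inr (hqp ▸ hbq)
  · rintro (rfl | hb)
    · exact Relation.ReflTransGen.refl
    · exact Relation.ReflTransGen.tail hb h

lemma Anc.total {a b c : N} (ha : Anc par a c) (hb : Anc par b c) :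
    Anc par a b ∨ Anc par b a := by
  induction ha with
  | refl => exact Or.inr hb
  | @tail d c had hdc ih =>
    rcases (anc_iff_eq_or_anc_of_par_eq_some hdc).1 hb with rfl | hbd
    · exact Or.inl (Relation.ReflTransGen.tail had hdc)
    · exact ih hbd

lemma isLCA_of_par_eq_some {l c v : N} (hl : par l = some c) (hv : Anc par c v)
    (hlv : ¬ Anc par l v) : IsLCA par c v l :=
  ⟨hv, anc_of_par_eq_some hl, fun _ hbv hbl =>
    ((anc_iff_eq_or_anc_of_par_eq_some hl).1 hbl).resolve_left (by rintro rfl; exact hlv hbv)⟩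

lemma IsLCA.of_anc_right {a v w z : N} (h : IsLCA par a v w) (hwv : ¬ Anc par w v)
    (hwz : Anc par w z) : IsLCA par a v z := by
  refine ⟨h.1, Relation.ReflTransGen.trans h.2.1 hwz, fun b hbv hbz => ?_⟩
  rcases hbz.total hwz with hbw | hwb
  · exact h.2.2 b hbv hbw
  · exact absurd (Relation.ReflTransGen.trans hwb hbv) hwv

lemma exists_isLCA {r v w : N} (hv : Anc par r v) (hw : Anc par r w) : ∃ a, IsLCA par a v w := by
  induction hv with
  | refl => exact ⟨r, Relation.ReflTransGen.refl, hw, fun _ hbr _ => hbr⟩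
  | @tail p v _ hpv ih =>
    obtain ⟨a, ha⟩ := ih
    by_cases hvw : Anc par v w
    · exact ⟨v, Relation.ReflTransGen.refl, hvw, fun _ hbv _ => hbv⟩
    · refine ⟨a, Relation.ReflTransGen.tail ha.1 hpv, ha.2.1, fun b hbv hbw => ha.2.2 b ?_ hbw⟩
      exact ((anc_iff_eq_or_anc_of_par_eq_some hpv).1 hbv).resolve_left
        (by rintro rfl; exact hvw hbw)

namespace ParAcyclic

lemma not_anc_of_par_eq_some (hac : ParAcyclic par) {c p : N} (h : par c = some p) :
    ¬ Anc par c p :=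
  fun hcp => hac c (Relation.TransGen.tail' hcp h)

variable {c₁ c₂ p : N}

lemma not_anc_of_siblings (hac : ParAcyclic par) (h₁ : par c₁ = some p) (h₂ : par c₂ = some p)
    (hne : c₁ ≠ c₂) : ¬ Anc par c₁ c₂ := by
  intro h
  rcases (anc_iff_eq_or_anc_of_par_eq_some h₂).1 h with rfl | hp
  · exact hne rfl
  · exact hac.not_anc_of_par_eq_some h₁ hp

lemma not_anc_of_anc_sibling (hac : ParAcyclic par) (h₁ : par c₁ = some p)
    (h₂ : par c₂ = some p) (hne : c₁ ≠ c₂) {w : N} (hw₁ : Anc par c₁ w) : ¬ Anc par c₂ w :=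
  fun hw₂ => (hw₁.total hw₂).elim (hac.not_anc_of_siblings h₁ h₂ hne)
    (hac.not_anc_of_siblings h₂ h₁ hne.symm)

lemma isLCA_of_siblings (hac : ParAcyclic par) (h₁ : par c₁ = some p) (h₂ : par c₂ = some p)
    (hne : c₁ ≠ c₂) {v w : N} (hv : Anc par c₁ v) (hw : Anc par c₂ w) : IsLCA par p v w := by
  refine ⟨Relation.ReflTransGen.trans (anc_of_par_eq_some h₁) hv,
    Relation.ReflTransGen.trans (anc_of_par_eq_some h₂) hw, fun b hbv hbw => ?_⟩
  have hc₁w : ¬ Anc par c₁ w := hac.not_anc_of_anc_sibling h₂ h₁ hne.symm hw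
  rcases hbv.total hv with hbc₁ | hc₁b
  · rcases (anc_iff_eq_or_anc_of_par_eq_some h₁).1 hbc₁ with rfl | hbp
    · exact absurd hbw hc₁w
    · exact hbp
  · exact absurd (Relation.ReflTransGen.trans hc₁b hbw) hc₁w

end ParAcyclic

end Forest

namespace IsCotree

variable {V N : Type*} {H : SimpleGraph V} {par : N → Option N} {ι : V → N} {lab : N → Bool}

lemma not_anc_leaf (hT : IsCotree H par ι lab) {x y : V} (hyx : y ≠ x) :
    ¬ Anc par (ι x) (ι y) := by
  intro h
  rcases Relation.ReflTransGen.cases_head h with h | ⟨c, hc, _⟩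
  · exact hyx (hT.inj h.symm)
  · exact hT.leaf_childless c x hc

lemma lab_ne_lab_of_par_eq_some (hT : IsCotree H par ι lab) {c p : N} {x : V}
    (hc : par c = some p) (hx : par (ι x) = some c) : lab c ≠ lab p :=
  (hT.alternating c p hc).resolve_left (by rintro ⟨v, rfl⟩; exact hT.leaf_childless _ v hx)

end IsCotree

theorem cut_detection_general {V N : Type*} (H : SimpleGraph V) (par : N → Option N)
    (ι : V → N) (lab : N → Bool) (hT : IsCotree H par ι lab)
    (u u' u'' : N) (hlabu : lab u = true) (hlabu' : lab u' = false)
    (hu' : par u' = some u) (hu'' : par u'' = some u) (hne : u'' ≠ u')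
    (F F' : Set V)
    (hF' : ∀ v ∈ F', par (ι v) = some u')
    (hF : ∀ v ∈ F, par (ι v) = some u'')
    (hDe : ∀ v : V, v ∈ De par ι u → v ∈ De par ι u' ∨ v ∈ F)
    (x : V) (hx : x ∈ F) (x' : V) (hx' : x' ∈ F')
    (y : V) (hyx : y ≠ x) (hyx' : y ≠ x') :
    ((H.Adj y x ↔ H.Adj y x') ↔ y ∉ De par ι u) := by
  have hxu'' : par (ι x) = some u'' := hF x hx
  have hx'u' : par (ι x') = some u' := hF' x' hx'
  constructor
  · intro hmod hyu
    rcases hDe y hyu with hyu' | hyF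
    · have hyx_adj : H.Adj y x := (hT.adj_iff y x hyx u (hT.acyclic.isLCA_of_siblings hu' hu''
        hne.symm hyu' (anc_of_par_eq_some hxu''))).2 hlabu
      have hyx'_adj := (hT.adj_iff y x' hyx' u'
        (isLCA_of_par_eq_some hx'u' hyu' (hT.not_anc_leaf hyx'))).1 (hmod.1 hyx_adj)
      exact Bool.false_ne_true (hlabu'.symm.trans hyx'_adj)
    · have hyu'' : par (ι y) = some u'' := hF y hyF
      have hyx'_adj : H.Adj y x' := (hT.adj_iff y x' hyx' u (hT.acyclic.isLCA_of_siblings hu'' hu'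
        hne (anc_of_par_eq_some hyu'') (anc_of_par_eq_some hx'u'))).2 hlabu
      have hyx_adj := (hT.adj_iff y x hyx u''
        (isLCA_of_par_eq_some hxu'' (anc_of_par_eq_some hyu'') (hT.not_anc_leaf hyx))).1
        (hmod.2 hyx'_adj)
      exact hT.lab_ne_lab_of_par_eq_some hu'' hxu'' (hyx_adj.trans hlabu.symm)
  · intro hyu
    obtain ⟨r, hr⟩ := hT.rooted
    obtain ⟨a, ha⟩ := exists_isLCA (hr (ι y)) (hr u)
    have hux : Anc par u (ι x) :=
      Relation.ReflTransGen.trans (anc_of_par_eq_some hu'') (anc_of_par_eq_some hxu'')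
    have hux' : Anc par u (ι x') :=
      Relation.ReflTransGen.trans (anc_of_par_eq_some hu') (anc_of_par_eq_some hx'u')
    rw [hT.adj_iff y x hyx a (ha.of_anc_right hyu hux),
      hT.adj_iff y x' hyx' a (ha.of_anc_right hyu hux')]

/-- in a cotree, let `u` be a `⊕`-node with a `+`-child `u'` and another
child `u''`, `F'` a set of leaf-children of `u'`, `F` a set of leaf-children of `u''`
with `De(u) ⊆ De(u') ∪ F`. For `x ∈ F`, `x' ∈ F'` and any vertex `y ∉ {x, x'}`, the
pair `{x, x'}` is a module of `H[{x, x', y}]` iff `y` is not a leaf-descendant of `u`. -/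
theorem cut_detection {V N : Type*} (H : SimpleGraph V) (par : N → Option N)
    (ι : V → N) (lab : N → Bool) (hT : IsCotree H par ι lab) (hH : IsCograph H)
    (u u' u'' : N) (hlabu : lab u = true) (hlabu' : lab u' = false)
    (hu' : par u' = some u) (hu'' : par u'' = some u) (hne : u'' ≠ u')
    (F F' : Set V)
    (hF' : ∀ v ∈ F', par (ι v) = some u')
    (hF : ∀ v ∈ F, par (ι v) = some u'')
    (hDe : ∀ v : V, v ∈ De par ι u → v ∈ De par ι u' ∨ v ∈ F)
    (x : V) (hx : x ∈ F) (x' : V) (hx' : x' ∈ F')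
    (y : V) (hyx : y ≠ x) (hyx' : y ≠ x') :
    ((H.Adj y x ↔ H.Adj y x') ↔ y ∉ De par ι u) :=
  cut_detection_general H par ι lab hT u u' u'' hlabu hlabu' hu' hu'' hne F F' hF' hF hDe x hx x'
    hx' y hyx hyx'
end

section
/- Suppose G has a nested t-module (A, B, C, K, I) with t ≥ 1, and suppose G admits a cograph edit of size at most k. Then every minimum cograph edit S of G (with |S| ≤ k) contains every pair {x,y} with x ∈ A, y ∈ I that is an edge of G, and every pair {x,y} with x ∈ A, y ∈ K that is a non-edge of G. -/
/-- `(A, B, C, K, I)` is a nested `t`-module of `G` (with parameter `k`). -/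
def IsNestedTModule {V : Type*} (G : SimpleGraph V) (k t : ℕ)
    (A B C K I : Set V) : Prop :=
  A.Nonempty ∧ B.Nonempty ∧ C.Nonempty ∧ K.Nonempty ∧ I.Nonempty ∧
  A ∪ B ∪ C ∪ K ∪ I = Set.univ ∧
  List.Pairwise Disjoint [A, B, C, K, I] ∧
  IsTModule G t A ∧ IsTModule G t (A ∪ B) ∧ IsTModule G t (A ∪ B ∪ C) ∧
  k + t < A.ncard ∧
  (∃ Bp ⊆ B, 3 * t + 1 ≤ Bp.ncard ∧ ∀ b ∈ Bp,
    (∀ a ∈ A, G.Adj b a) ∧ (∀ w ∈ K, G.Adj b w) ∧ (∀ i ∈ I, ¬ G.Adj b i)) ∧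
  (∃ Bq ⊆ B, 3 * t + 1 ≤ Bq.ncard ∧ ∀ b ∈ Bq,
    (∀ a ∈ A, ¬ G.Adj b a) ∧ (∀ w ∈ K, G.Adj b w) ∧ (∀ i ∈ I, ¬ G.Adj b i)) ∧
  (∃ Cp ⊆ C, 3 * t + 1 ≤ Cp.ncard ∧ ∀ c ∈ Cp,
    (∀ a ∈ A ∪ B, G.Adj c a) ∧ (∀ w ∈ K, G.Adj c w) ∧ (∀ i ∈ I, ¬ G.Adj c i)) ∧
  (∃ Cq ⊆ C, 3 * t + 1 ≤ Cq.ncard ∧ ∀ c ∈ Cq,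
    (∀ a ∈ A ∪ B, ¬ G.Adj c a) ∧ (∀ w ∈ K, G.Adj c w) ∧ (∀ i ∈ I, ¬ G.Adj c i))
/-!
A large `t`-module `X` costs a minimum cograph edit `S` at most `t` pairs of its cut: otherwise
replace `S` on `δ(X)` by the `≤ t` pairs that turn `X` into a module, and let every vertex of `X`
copy the outside neighbourhood of a vertex `x₀ ∈ X` that no pair of `S` or of that edit touches.
This substitutes `X` for `x₀`, and substitution preserves cographs since a `P₄` has no nontrivial
module. So each of the nested `t`-modules `A`, `A ∪ B`, `A ∪ B ∪ C` loses at most `t` cut pairs to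
`S`, and the `3t + 1` vertices of each of `B_⊕, B_+, C_⊕, C_+` leave room to choose vertices
joined to the relevant vertices by unedited pairs. An unedited edge `xy` with `x ∈ A`, `y ∈ I` then
extends to the induced path `y - x - c - b` (`c ∈ C_⊕`, `b ∈ B_+`), and an unedited non-edge with
`y ∈ K` to `x - b - y - c` (`b ∈ B_⊕`, `c ∈ C_+`).
-/

section

variable {V : Type*}

theorem mk_mem_cutPairs_iff {X : Set V} {u v : V} :
    s(u, v) ∈ cutPairs X ↔ ¬(u ∈ X ↔ v ∈ X) := by
  constructor
  · rintro ⟨x, y, h, hx, hy⟩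
    rcases Sym2.eq_iff.1 h with ⟨rfl, rfl⟩ | ⟨rfl, rfl⟩ <;> tauto
  · intro h
    by_cases hu : u ∈ X
    · exact ⟨u, v, rfl, hu, by tauto⟩
    · exact ⟨v, u, Sym2.eq_swap, by tauto, hu⟩

section Edit

variable {G : SimpleGraph V} {S S' : Set (Sym2 V)} {u v : V}

theorem editGraph_adj_congr (h : s(u, v) ∈ S ↔ s(u, v) ∈ S') :
    (editGraph G S).Adj u v ↔ (editGraph G S').Adj u v := by
  simp only [editGraph, h]

theorem editGraph_adj_of_notMem (h : s(u, v) ∉ S) : (editGraph G S).Adj u v ↔ G.Adj u v := by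
  simp only [editGraph, h, and_false, or_false, not_false_eq_true, and_true]
  exact ⟨And.right, fun huv => ⟨huv.ne, huv⟩⟩

end Edit

section InducedP4

variable {H H' : SimpleGraph V} {a b c d : V}

theorem IsInducedP4.of_adj (hab : H.Adj a b) (hbc : H.Adj b c) (hcd : H.Adj c d)
    (hac : ¬ H.Adj a c) (had : ¬ H.Adj a d) (hbd : ¬ H.Adj b d) : IsInducedP4 H a b c d :=
  ⟨hab.ne, by rintro rfl; exact had hcd, by rintro rfl; exact hac hcd.symm, hbc.ne,
    by rintro rfl; exact had hab, hcd.ne, hab, hbc, hcd, hac, had, hbd⟩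

theorem IsInducedP4.map (hP : IsInducedP4 H' a b c d) (f : V → V)
    (hf : ∀ u ∈ ({a, b, c, d} : Set V), ∀ v ∈ ({a, b, c, d} : Set V), u ≠ v →
      (H'.Adj u v ↔ H.Adj (f u) (f v))) :
    IsInducedP4 H (f a) (f b) (f c) (f d) := by
  obtain ⟨hab', hac', had', hbc', hbd', hcd', hab, hbc, hcd, hac, had, hbd⟩ := hP
  exact .of_adj ((hf a (by simp) b (by simp) hab').1 hab) ((hf b (by simp) c (by simp) hbc').1 hbc)
    ((hf c (by simp) d (by simp) hcd').1 hcd) (mt (hf a (by simp) c (by simp) hac').2 hac)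
    (mt (hf a (by simp) d (by simp) had').2 had) (mt (hf b (by simp) d (by simp) hbd').2 hbd)

theorem IsInducedP4.editGraph {S : Set (Sym2 V)} (hP : IsInducedP4 H a b c d)
    (hab : s(a, b) ∉ S) (hbc : s(b, c) ∉ S) (hcd : s(c, d) ∉ S) (hac : s(a, c) ∉ S)
    (had : s(a, d) ∉ S) (hbd : s(b, d) ∉ S) : IsInducedP4 (editGraph H S) a b c d := by
  obtain ⟨-, -, -, -, -, -, Hab, Hbc, Hcd, Hac, Had, Hbd⟩ := hP
  exact .of_adj ((editGraph_adj_of_notMem hab).2 Hab) ((editGraph_adj_of_notMem hbc).2 Hbc)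
    ((editGraph_adj_of_notMem hcd).2 Hcd) (mt (editGraph_adj_of_notMem hac).1 Hac)
    (mt (editGraph_adj_of_notMem had).1 Had) (mt (editGraph_adj_of_notMem hbd).1 Hbd)

theorem IsInducedP4.inter_subsingleton_of_isModule {X : Set V} (hP : IsInducedP4 H a b c d)
    (hX : IsModule H X) (hout : ¬ {a, b, c, d} ⊆ X) : ({a, b, c, d} ∩ X).Subsingleton := by
  obtain ⟨-, -, -, -, -, -, hab, hbc, hcd, hac, had, hbd⟩ := hP
  simp only [Set.insert_subset_iff, Set.singleton_subset_iff, not_and_or] at hout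
  intro u ⟨hu, huX⟩ v ⟨hv, hvX⟩
  simp only [Set.mem_insert_iff, Set.mem_singleton_iff] at hu hv
  rcases hu with rfl | rfl | rfl | rfl <;> rcases hv with rfl | rfl | rfl | rfl <;>
    grind [IsModule, SimpleGraph.adj_comm]

/-- Substituting the graph `H'[X]` for the vertex `x₀` of the cograph `H` yields a cograph. -/
theorem IsCograph.of_isModule {X : Set V} {x₀ : V} (hH : IsCograph H) (hx₀ : x₀ ∈ X)
    (hmod : IsModule H' X) (hcut : ∀ u v, s(u, v) ∉ cutPairs X → (H'.Adj u v ↔ H.Adj u v))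
    (hx₀adj : ∀ v ∉ X, (H'.Adj v x₀ ↔ H.Adj v x₀)) : IsCograph H' := by
  classical
  intro a b c d hP
  by_cases hin : {a, b, c, d} ⊆ X
  · refine hH a b c d (hP.map id fun u hu v hv _ => hcut u v ?_)
    simp [mk_mem_cutPairs_iff, hin hu, hin hv]
  have hsub := hP.inter_subsingleton_of_isModule hmod hin
  refine hH _ _ _ _ (hP.map (fun u => if u ∈ X then x₀ else u) fun u hu v hv huv => ?_)
  have : ¬ (u ∈ X ∧ v ∈ X) := fun h => huv (hsub ⟨hu, h.1⟩ ⟨hv, h.2⟩)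
  by_cases huX : u ∈ X <;> by_cases hvX : v ∈ X <;> simp only [huX, hvX, if_true, if_false]
  · tauto
  · rw [H'.adj_comm, hmod u huX x₀ hx₀ v hvX, hx₀adj v hvX, H.adj_comm]
  · rw [hmod v hvX x₀ hx₀ u huX, hx₀adj u huX]
  · exact hcut u v (by simp [mk_mem_cutPairs_iff, huX, hvX])

end InducedP4

section Counting

theorem exists_mem_forall_mk_notMem_of_ncard_lt [Finite V] {X : Set V} {R : Set (Sym2 V)}
    (h : R.ncard < X.ncard) : ∃ x ∈ X, ∀ v ∉ X, s(x, v) ∉ R := by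
  set D := {u ∈ X | ∃ v ∉ X, s(u, v) ∈ R}
  choose! f hfX hfR using fun u (hu : u ∈ D) => hu.2
  have hD : D.ncard ≤ R.ncard := by
    refine Set.ncard_le_ncard_of_injOn (fun u => s(u, f u)) hfR fun u hu u' hu' h => ?_
    rcases Sym2.eq_iff.1 h with ⟨h, -⟩ | ⟨-, h⟩
    · exact h
    · exact absurd hu'.1 (h ▸ hfX u hu)
  obtain ⟨x, hxX, hxD⟩ := Set.exists_mem_notMem_of_ncard_lt_ncard (hD.trans_lt h)
  exact ⟨x, hxX, fun v hv hR => hxD ⟨hxX, v, hv, hR⟩⟩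

theorem exists_mem_forall_mk_notMem {S : Set (Sym2 V)} {P : Set V} {t : ℕ} (Q : Finset V)
    (hQ : ∀ p ∈ Q, {w ∈ P | s(p, w) ∈ S}.ncard ≤ t) (hcard : Q.card * t < P.ncard) :
    ∃ w ∈ P, ∀ p ∈ Q, s(p, w) ∉ S := by
  have hbad : (⋃ p ∈ Q, {w ∈ P | s(p, w) ∈ S}).ncard < P.ncard := calc
    _ ≤ ∑ p ∈ Q, {w ∈ P | s(p, w) ∈ S}.ncard := Q.set_ncard_biUnion_le _
    _ ≤ Q.card * t := by simpa using Finset.sum_le_card_nsmul Q _ t hQ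
    _ < P.ncard := hcard
  have hfin : (⋃ p ∈ Q, {w ∈ P | s(p, w) ∈ S}).Finite :=
    (Set.finite_of_ncard_pos (by omega)).subset (Set.iUnion₂_subset fun _ _ => Set.sep_subset _ _)
  obtain ⟨w, hwP, hw⟩ := Set.exists_mem_notMem_of_ncard_lt_ncard hbad hfin
  exact ⟨w, hwP, fun p hp hS => hw (Set.mem_biUnion hp ⟨hwP, hS⟩)⟩

variable [Finite V] {S : Set (Sym2 V)} {X P : Set V} {p : V} {t : ℕ}

theorem ncard_setOf_mk_mem_le {R : Set (Sym2 V)} (hR : ∀ w ∈ P, s(p, w) ∈ R) :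
    {w ∈ P | s(p, w) ∈ S}.ncard ≤ (S ∩ R).ncard :=
  Set.ncard_le_ncard_of_injOn (fun w => s(p, w)) (fun w hw => ⟨hw.2, hR w hw.1⟩)
    fun _ _ _ _ h => Sym2.congr_right.1 h

theorem ncard_setOf_mk_mem_le_of_mem (hS : (S ∩ cutPairs X).ncard ≤ t) (hp : p ∈ X)
    (hP : Disjoint P X) : {w ∈ P | s(p, w) ∈ S}.ncard ≤ t :=
  (ncard_setOf_mk_mem_le fun w hw => mk_mem_cutPairs_iff.2
    (by simp [hp, Set.disjoint_left.1 hP hw])).trans hS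

theorem ncard_setOf_mk_mem_le_of_notMem (hS : (S ∩ cutPairs X).ncard ≤ t) (hp : p ∉ X)
    (hP : P ⊆ X) : {w ∈ P | s(p, w) ∈ S}.ncard ≤ t :=
  (ncard_setOf_mk_mem_le fun w hw => mk_mem_cutPairs_iff.2 (by simp [hp, hP hw])).trans hS

end Counting

section Budget

variable [Finite V] {G : SimpleGraph V} {S T : Set (Sym2 V)} {X : Set V}

theorem ncard_inter_cutPairs_le_of_isModule (hcog : IsCograph (editGraph G S))
    (hmin : ∀ S', IsCograph (editGraph G S') → S.ncard ≤ S'.ncard) (hT : T ⊆ cutPairs X)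
    (hmod : IsModule (editGraph G T) X) (hbig : S.ncard + T.ncard < X.ncard) :
    (S ∩ cutPairs X).ncard ≤ T.ncard := by
  obtain ⟨x₀, hx₀, hfree⟩ := exists_mem_forall_mk_notMem_of_ncard_lt (R := S ∪ T) (X := X)
    ((Set.ncard_union_le S T).trans_lt hbig)
  set S' := S \ cutPairs X ∪ T
  have hoff : ∀ u v, s(u, v) ∉ cutPairs X →
      ((editGraph G S').Adj u v ↔ (editGraph G S).Adj u v) := fun u v huv =>
    editGraph_adj_congr (by simp only [S', Set.mem_union, Set.mem_sdiff, huv]; grind)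
  have hon : ∀ u v, s(u, v) ∈ cutPairs X →
      ((editGraph G S').Adj u v ↔ (editGraph G T).Adj u v) := fun u v huv =>
    editGraph_adj_congr (by simp [S', huv])
  have hmod' : IsModule (editGraph G S') X := fun u hu w hw v hv => by
    rw [hon v u (by simp [mk_mem_cutPairs_iff, hu, hv]),
      hon v w (by simp [mk_mem_cutPairs_iff, hw, hv])]
    exact hmod u hu w hw v hv
  have hx₀adj : ∀ v ∉ X, ((editGraph G S').Adj v x₀ ↔ (editGraph G S).Adj v x₀) := by
    intro v hv
    have hvx₀ : s(v, x₀) ∉ S ∪ T := Sym2.eq_swap ▸ hfree v hv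
    rw [hon v x₀ (by simp [mk_mem_cutPairs_iff, hx₀, hv]),
      editGraph_adj_of_notMem fun h => hvx₀ (Or.inr h),
      editGraph_adj_of_notMem fun h => hvx₀ (Or.inl h)]
  have hS' := hmin S' (hcog.of_isModule hx₀ hmod' hoff hx₀adj)
  have : S'.ncard ≤ (S \ cutPairs X).ncard + T.ncard := Set.ncard_union_le _ _
  have := Set.ncard_inter_add_ncard_sdiff_eq_ncard S (cutPairs X)
  omega

theorem ncard_inter_cutPairs_le_of_isTModule {k t : ℕ} (hcog : IsCograph (editGraph G S))
    (hmin : ∀ S', IsCograph (editGraph G S') → S.ncard ≤ S'.ncard) (hk : S.ncard ≤ k)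
    (hX : IsTModule G t X) (hbig : k + t < X.ncard) : (S ∩ cutPairs X).ncard ≤ t := by
  obtain ⟨T, hT, hTt, hmod⟩ := hX
  exact (ncard_inter_cutPairs_le_of_isModule hcog hmin hT hmod (by omega)).trans hTt

end Budget

namespace IsNestedTModule

variable {G : SimpleGraph V} {k t : ℕ} {A B C K I : Set V}

theorem disjoint (h : IsNestedTModule G k t A B C K I) :
    Disjoint A B ∧ Disjoint (A ∪ B) C ∧ Disjoint (A ∪ B ∪ C) K ∧ Disjoint (A ∪ B ∪ C) I := by
  obtain ⟨-, -, -, -, -, -, hdisj, -⟩ := h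
  simp only [List.pairwise_cons, List.mem_cons, List.not_mem_nil, forall_eq_or_imp,
    List.Pairwise.nil] at hdisj
  simp only [Set.disjoint_union_left]
  tauto

variable [Finite V] {S : Set (Sym2 V)}

theorem ncard_inter_cutPairs_le (h : IsNestedTModule G k t A B C K I)
    (hcog : IsCograph (editGraph G S))
    (hmin : ∀ S', IsCograph (editGraph G S') → S.ncard ≤ S'.ncard) (hk : S.ncard ≤ k) :
    (S ∩ cutPairs A).ncard ≤ t ∧ (S ∩ cutPairs (A ∪ B)).ncard ≤ t ∧
      (S ∩ cutPairs (A ∪ B ∪ C)).ncard ≤ t := by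
  obtain ⟨-, -, -, -, -, -, -, hA, hAB, hABC, hcard, -⟩ := h
  have budget : ∀ X, IsTModule G t X → A ⊆ X → (S ∩ cutPairs X).ncard ≤ t := fun X hX hAX =>
    ncard_inter_cutPairs_le_of_isTModule hcog hmin hk hX (hcard.trans_le (Set.ncard_le_ncard hAX))
  exact ⟨budget A hA subset_rfl, budget _ hAB Set.subset_union_left,
    budget _ hABC (Set.subset_union_left.trans Set.subset_union_left)⟩

variable {x y : V}

theorem mk_mem_of_adj (h : IsNestedTModule G k t A B C K I) (hcog : IsCograph (editGraph G S))
    (hA : (S ∩ cutPairs A).ncard ≤ t) (hAB : (S ∩ cutPairs (A ∪ B)).ncard ≤ t)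
    (hABC : (S ∩ cutPairs (A ∪ B ∪ C)).ncard ≤ t) (hx : x ∈ A) (hy : y ∈ I) (hxy : G.Adj x y) :
    s(x, y) ∈ S := by
  classical
  obtain ⟨dAB, dABC, -, dI⟩ := h.disjoint
  have hyABC : y ∉ A ∪ B ∪ C := Set.disjoint_right.1 dI hy
  obtain ⟨-, -, -, -, -, -, -, -, -, -, -, -, ⟨Bq, hBq, hBqcard, hBqadj⟩,
    ⟨Cp, hCp, hCpcard, hCpadj⟩, -⟩ := h
  by_contra hxyS
  obtain ⟨c, hc, hcS⟩ := exists_mem_forall_mk_notMem {x, y} (P := Cp) (S := S) (t := t)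
    (by simpa using ⟨ncard_setOf_mk_mem_le_of_mem hAB (Or.inl hx) (dABC.symm.mono_left hCp),
      ncard_setOf_mk_mem_le_of_notMem hABC hyABC (hCp.trans Set.subset_union_right)⟩)
    ((Nat.mul_le_mul_right t Finset.card_le_two).trans_lt (by omega))
  have hcAB : c ∉ A ∪ B := Set.disjoint_right.1 dABC (hCp hc)
  obtain ⟨b, hb, hbS⟩ := exists_mem_forall_mk_notMem {x, y, c} (P := Bq) (S := S) (t := t)
    (by simpa using ⟨ncard_setOf_mk_mem_le_of_mem hA hx (dAB.symm.mono_left hBq),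
      ncard_setOf_mk_mem_le_of_notMem hABC hyABC fun b hb => Or.inl (Or.inr (hBq hb)),
      ncard_setOf_mk_mem_le_of_notMem hAB hcAB fun b hb => Or.inr (hBq hb)⟩)
    ((Nat.mul_le_mul_right t Finset.card_le_three).trans_lt (by omega))
  have hP : IsInducedP4 G y x c b :=
    .of_adj hxy.symm ((hCpadj c hc).1 x (Or.inl hx)).symm ((hCpadj c hc).1 b (Or.inr (hBq hb)))
      (fun h => (hCpadj c hc).2.2 y hy h.symm) (fun h => (hBqadj b hb).2.2 y hy h.symm)
      (fun h => (hBqadj b hb).1 x hx h.symm)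
  exact hcog y x c b (hP.editGraph (by rwa [Sym2.eq_swap]) (hcS x (by simp)) (hbS c (by simp))
    (hcS y (by simp)) (hbS y (by simp)) (hbS x (by simp)))

theorem mk_mem_of_not_adj (h : IsNestedTModule G k t A B C K I)
    (hcog : IsCograph (editGraph G S)) (hA : (S ∩ cutPairs A).ncard ≤ t)
    (hAB : (S ∩ cutPairs (A ∪ B)).ncard ≤ t) (hABC : (S ∩ cutPairs (A ∪ B ∪ C)).ncard ≤ t)
    (hx : x ∈ A) (hy : y ∈ K) (hxy : ¬ G.Adj x y) : s(x, y) ∈ S := by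
  classical
  obtain ⟨dAB, dABC, dK, -⟩ := h.disjoint
  have hyABC : y ∉ A ∪ B ∪ C := Set.disjoint_right.1 dK hy
  obtain ⟨-, -, -, -, -, -, -, -, -, -, -, ⟨Bp, hBp, hBpcard, hBpadj⟩, -, -,
    ⟨Cq, hCq, hCqcard, hCqadj⟩⟩ := h
  by_contra hxyS
  obtain ⟨b, hb, hbS⟩ := exists_mem_forall_mk_notMem {x, y} (P := Bp) (S := S) (t := t)
    (by simpa using ⟨ncard_setOf_mk_mem_le_of_mem hA hx (dAB.symm.mono_left hBp),
      ncard_setOf_mk_mem_le_of_notMem hABC hyABC fun b hb => Or.inl (Or.inr (hBp hb))⟩)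
    ((Nat.mul_le_mul_right t Finset.card_le_two).trans_lt (by omega))
  obtain ⟨c, hc, hcS⟩ := exists_mem_forall_mk_notMem {x, y, b} (P := Cq) (S := S) (t := t)
    (by simpa using ⟨ncard_setOf_mk_mem_le_of_mem hAB (Or.inl hx) (dABC.symm.mono_left hCq),
      ncard_setOf_mk_mem_le_of_notMem hABC hyABC (hCq.trans Set.subset_union_right),
      ncard_setOf_mk_mem_le_of_mem hAB (Or.inr (hBp hb)) (dABC.symm.mono_left hCq)⟩)
    ((Nat.mul_le_mul_right t Finset.card_le_three).trans_lt (by omega))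
  have hP : IsInducedP4 G x b y c :=
    .of_adj ((hBpadj b hb).1 x hx).symm ((hBpadj b hb).2.1 y hy) ((hCqadj c hc).2.1 y hy).symm hxy
      (fun h => (hCqadj c hc).1 x (Or.inl hx) h.symm)
      (fun h => (hCqadj c hc).1 b (Or.inr (hBp hb)) h.symm)
  exact hcog x b y c (hP.editGraph (hbS x (by simp)) (by rw [Sym2.eq_swap]; exact hbS y (by simp))
    (hcS y (by simp)) hxyS (hcS x (by simp)) (hcS b (by simp)))

end IsNestedTModule

end

theorem nested_tmodule_rule_safe_general {V : Type*} [Fintype V] (G : SimpleGraph V)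
    (k t : ℕ) (A B C K I : Set V)
    (hnest : IsNestedTModule G k t A B C K I)
    (S : Set (Sym2 V)) (hcog : IsCograph (editGraph G S)) (hk : S.ncard ≤ k)
    (hmin : ∀ S', IsCograph (editGraph G S') → S.ncard ≤ S'.ncard) :
    (∀ x ∈ A, ∀ y ∈ I, G.Adj x y → s(x,y) ∈ S) ∧
    (∀ x ∈ A, ∀ y ∈ K, x ≠ y → ¬ G.Adj x y → s(x,y) ∈ S) := by
  obtain ⟨hA, hAB, hABC⟩ := hnest.ncard_inter_cutPairs_le hcog hmin hk
  exact ⟨fun x hx y hy => hnest.mk_mem_of_adj hcog hA hAB hABC hx hy,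
    fun x hx y hy _ => hnest.mk_mem_of_not_adj hcog hA hAB hABC hx hy⟩

/-- if `G` has a nested `t`-module `(A, B, C, K, I)` with `t ≥ 1` and
admits a cograph edit of size at most `k`, then every minimum cograph edit `S` of `G`
(of size at most `k`) contains every edge of `G` between `A` and `I` and every
non-edge of `G` between `A` and `K`. -/
theorem nested_tmodule_rule_safe {V : Type*} [Fintype V] (G : SimpleGraph V)
    (k t : ℕ) (ht : 1 ≤ t) (A B C K I : Set V)
    (hnest : IsNestedTModule G k t A B C K I)
    (hexists : ∃ S0 : Set (Sym2 V), IsCograph (editGraph G S0) ∧ S0.ncard ≤ k)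
    (S : Set (Sym2 V)) (hcog : IsCograph (editGraph G S)) (hk : S.ncard ≤ k)
    (hmin : ∀ S', IsCograph (editGraph G S') → S.ncard ≤ S'.ncard) :
    (∀ x ∈ A, ∀ y ∈ I, G.Adj x y → s(x,y) ∈ S) ∧
    (∀ x ∈ A, ∀ y ∈ K, x ≠ y → ¬ G.Adj x y → s(x,y) ∈ S) :=
  nested_tmodule_rule_safe_general G k t A B C K I hnest S hcog hk hmin
end
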